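/- Assume μ₂ ≥ μ₁ and h₁/μ₁ ≥ h₂/μ₂. Fix k, ℓ with k + ℓ = C₁, k ≥ 1 and ℓ ≥ C₂. Then: (1) D(i,k,ℓ) − D(i+1,k,ℓ) ≥ 0 for all i ≥ 0, i.e. i ↦ D(i,k,ℓ) is non-increasing; (2) there exists a natural number N such that for all i ≥ 0, D(i,k,ℓ) ≤ 0 if and only if i ≥ N, and moreover D(i,k,ℓ) < 0 for all sufficiently large i. -/

import Mathlib

/-!
On the full layer `k + ℓ = C₁` write `V i j = v i j (C₁ - j)`. Without arrivals the two job
types clear independently, which gives `v 0` in closed form. In the saturated states the gain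
`W i = V (i + 1) - V i` is an average of `h₀ / d` and of the gains of the post-departure values,
which are minima of two neighbouring values of `V`; a minimum moves by no less than the smaller
and no more than the larger of the moves of its arguments. Hence, by induction on `i`, the
post-departure gains are non-increasing in `j`, which forces
`W i j - W i (j + 1) ≥ h₀ μ₁ / (d j * d (j + 1)) > 0`, where `d j = j μ₁ + C₂ μ₂`. At the border with the unsaturated states
this needs `V i` to be non-decreasing there, an induction comparing cost rates that uses
`μ₁ ≤ μ₂` and `h₂ / μ₂ ≤ h₁ / μ₁`. So `D` drops by a fixed `ε > 0` at each step.
-/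

/-- Overall service rate `d(k,ℓ) = k·μ₁ + min(ℓ,C₂)·μ₂`. -/
noncomputable def dRate (C₂ : ℕ) (μ₁ μ₂ : ℝ) (k ℓ : ℕ) : ℝ :=
  (k : ℝ) * μ₁ + ((min ℓ C₂ : ℕ) : ℝ) * μ₂

/-- Membership of `(i,k,ℓ)` in the state space `X`. -/
def memX (C₁ : ℕ) (i k ℓ : ℕ) : Prop :=
  (i = 0 ∧ k + ℓ < C₁) ∨ k + ℓ = C₁

/-- `v` satisfies the optimality (Bellman) equations of the clearing system.
Terms whose coefficient `k·μ₁` or `min(ℓ,C₂)·μ₂` vanishes contribute `0`,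
matching the convention that such summands are omitted. -/
def IsValue (C₁ C₂ : ℕ) (μ₁ μ₂ h₀ h₁ h₂ : ℝ) (v : ℕ → ℕ → ℕ → ℝ) : Prop :=
  v 0 0 0 = 0 ∧
  (∀ k ℓ : ℕ, k + ℓ ≤ C₁ → ¬(k = 0 ∧ ℓ = 0) →
    v 0 k ℓ = ((k : ℝ) * h₁ + (ℓ : ℝ) * h₂) / dRate C₂ μ₁ μ₂ k ℓ
      + ((k : ℝ) * μ₁ / dRate C₂ μ₁ μ₂ k ℓ) * v 0 (k - 1) ℓ
      + (((min ℓ C₂ : ℕ) : ℝ) * μ₂ / dRate C₂ μ₁ μ₂ k ℓ) * v 0 k (ℓ - 1)) ∧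
  (∀ i k ℓ : ℕ, k + ℓ = C₁ →
    v (i + 1) k ℓ =
      (((i : ℝ) + 1) * h₀ + (k : ℝ) * h₁ + (ℓ : ℝ) * h₂) / dRate C₂ μ₁ μ₂ k ℓ
      + ((k : ℝ) * μ₁ / dRate C₂ μ₁ μ₂ k ℓ) *
          min (v i k ℓ) (v i (k - 1) (ℓ + 1))
      + (((min ℓ C₂ : ℕ) : ℝ) * μ₂ / dRate C₂ μ₁ μ₂ k ℓ) *
          min (v i (k + 1) (ℓ - 1)) (v i k ℓ))

/-- The difference `D(i,k,ℓ) = v(i,k,ℓ) − v(i,k−1,ℓ+1)`. -/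
noncomputable def Dv (v : ℕ → ℕ → ℕ → ℝ) (i k ℓ : ℕ) : ℝ :=
  v i k ℓ - v i (k - 1) (ℓ + 1)

theorem min_sub_min_le_max_sub {α : Type*} [AddCommGroup α] [LinearOrder α]
    [IsOrderedAddMonoid α] (a b c d : α) : min a b - min c d ≤ max (a - c) (b - d) := by
  rcases le_total c d with h | h
  · rw [min_eq_left h]
    exact (sub_le_sub_right (min_le_left a b) c).trans (le_max_left _ _)
  · rw [min_eq_right h]
    exact (sub_le_sub_right (min_le_right a b) d).trans (le_max_right _ _)

theorem min_sub_le_min_sub_min {α : Type*} [AddCommGroup α] [LinearOrder α]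
    [IsOrderedAddMonoid α] (a b c d : α) : min (a - c) (b - d) ≤ min a b - min c d := by
  rcases le_total a b with h | h
  · rw [min_eq_left h]
    exact (min_le_left _ _).trans (sub_le_sub_left (min_le_left c d) a)
  · rw [min_eq_right h]
    exact (min_le_right _ _).trans (sub_le_sub_left (min_le_right c d) b)

theorem weighted_le {p q d a b z : ℝ} (hp : 0 ≤ p) (hq : 0 ≤ q) (hd : 0 < d) (hpq : p + q = d)
    (ha : a ≤ z) (hb : b ≤ z) : p / d * a + q / d * b ≤ z := by
  rw [div_mul_eq_mul_div, div_mul_eq_mul_div, ← add_div, div_le_iff₀ hd, ← hpq]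
  nlinarith

theorem le_weighted {p q d a b z : ℝ} (hp : 0 ≤ p) (hq : 0 ≤ q) (hd : 0 < d) (hpq : p + q = d)
    (ha : z ≤ a) (hb : 0 < q → z ≤ b) : z ≤ p / d * a + q / d * b := by
  rcases hq.eq_or_lt with rfl | hq
  · rw [add_zero] at hpq
    subst hpq
    rw [div_self hd.ne', zero_div, zero_mul, add_zero, one_mul]
    exact ha
  · rw [div_mul_eq_mul_div, div_mul_eq_mul_div, ← add_div, le_div_iff₀ hd, ← hpq]
    nlinarith [hb hq]

theorem average_sub_succ_ge {μ b h₀ : ℝ} {P W : ℕ → ℝ} {j : ℕ} (hμ : 0 < μ) (hb : 0 < b)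
    (hW : ∀ m ≤ j + 1, W m = (h₀ + m * μ * P m + b * P (m + 1)) / (m * μ + b))
    (hP₀ : 0 < j → P (j + 1) ≤ P j) (hP₁ : P (j + 2) ≤ P (j + 1)) :
    h₀ * μ / ((j * μ + b) * ((j + 1) * μ + b)) ≤ W j - W (j + 1) := by
  have hd₀ : 0 < j * μ + b := by positivity
  have hd₁ : 0 < (j + 1) * μ + b := by positivity
  have key : W j - W (j + 1) = h₀ * μ / ((j * μ + b) * ((j + 1) * μ + b))
      + j * μ / (j * μ + b) * (P j - P (j + 1))
      + b / ((j + 1) * μ + b) * (P (j + 1) - P (j + 2)) := by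
    rw [hW j (by omega), hW (j + 1) le_rfl]
    push_cast
    field_simp
    ring
  have hfirst : 0 ≤ j * μ / (j * μ + b) * (P j - P (j + 1)) := by
    rcases Nat.eq_zero_or_pos j with rfl | hj
    · simp
    · exact mul_nonneg (by positivity) (sub_nonneg.2 (hP₀ hj))
  have hsecond : 0 ≤ b / ((j + 1) * μ + b) * (P (j + 1) - P (j + 2)) :=
    mul_nonneg (by positivity) (sub_nonneg.2 hP₁)
  linarith

theorem cost_div_rate_le_of_swap {c x y μ₁ μ₂ h₁ h₂ : ℝ} (hc : 0 ≤ c) (hx : 0 ≤ x) (hy : 0 ≤ y)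
    (hμ₁ : 0 < μ₁) (hμ : μ₁ ≤ μ₂) (hcost : h₂ * μ₁ ≤ h₁ * μ₂) :
    (c + x * h₁ + (y + 1) * h₂) / (x * μ₁ + (y + 1) * μ₂)
      ≤ (c + (x + 1) * h₁ + y * h₂) / ((x + 1) * μ₁ + y * μ₂) := by
  have hμ₂ : 0 < μ₂ := hμ₁.trans_le hμ
  rw [div_le_div_iff₀ (by positivity) (by positivity)]
  nlinarith [mul_nonneg hc (sub_nonneg.2 hμ),
    mul_nonneg (by positivity : (0 : ℝ) ≤ x + y + 1) (sub_nonneg.2 hcost)]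

theorem exists_nonpos_iff_and_eventually_neg {D : ℕ → ℝ} {ε : ℝ} (hε : 0 < ε)
    (hD : ∀ i, D (i + 1) ≤ D i - ε) :
    ∃ N : ℕ, (∀ i, D i ≤ 0 ↔ N ≤ i) ∧ ∃ I : ℕ, ∀ i, I ≤ i → D i < 0 := by
  have hanti : Antitone D := antitone_nat_of_succ_le fun i => (hD i).trans (by linarith)
  have hdecay : ∀ i : ℕ, D i ≤ D 0 - i * ε := by
    intro i
    induction i with
    | zero => simp
    | succ i ih => push_cast; linarith [hD i]
  obtain ⟨I, hI⟩ := exists_nat_gt (D 0 / ε)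
  have hneg : ∀ i, I ≤ i → D i < 0 := fun i hi => by
    have h₁ : D 0 < I * ε := (div_lt_iff₀ hε).1 hI
    have h₂ : (I : ℝ) * ε ≤ i * ε := by gcongr
    linarith [hdecay i]
  classical
  have hex : ∃ n, D n ≤ 0 := ⟨I, (hneg I le_rfl).le⟩
  exact ⟨Nat.find hex, fun i => ⟨Nat.find_min' hex, fun h => (hanti h).trans (Nat.find_spec hex)⟩,
    I, hneg⟩

section ClearingSystem

variable {C₁ C₂ : ℕ} {μ₁ μ₂ h₀ h₁ h₂ : ℝ} {v : ℕ → ℕ → ℕ → ℝ}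

theorem dRate_pos (hμ₁ : 0 < μ₁) (hμ₂ : 0 < μ₂) (hC₂ : 1 ≤ C₂) {k ℓ : ℕ} (h : k + ℓ ≠ 0) :
    0 < dRate C₂ μ₁ μ₂ k ℓ := by
  rw [dRate]
  rcases Nat.eq_zero_or_pos k with rfl | hk
  · have hmin : (0 : ℝ) < (min ℓ C₂ : ℕ) := by exact_mod_cast (by omega : 0 < min ℓ C₂)
    simpa using mul_pos hmin hμ₂
  · exact add_pos_of_pos_of_nonneg (mul_pos (Nat.cast_pos.2 hk) hμ₁) (by positivity)

/-- Holding cost of clearing `n` type-2 jobs without arrivals: while `m` of them remain they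
cost `m h₂` per unit time and leave at rate `min m C₂ μ₂`, and `m / min m C₂ = max 1 (m / C₂)`. -/
noncomputable def typeTwoCost (C₂ : ℕ) (μ₂ h₂ : ℝ) : ℕ → ℝ
  | 0 => 0
  | n + 1 => typeTwoCost C₂ μ₂ h₂ n + max 1 (((n + 1 : ℕ) : ℝ) / C₂) * (h₂ / μ₂)

theorem min_mul_max_one_div (hC₂ : 1 ≤ C₂) (n : ℕ) :
    ((min n C₂ : ℕ) : ℝ) * max 1 ((n : ℝ) / C₂) = n := by
  have hC : (0 : ℝ) < C₂ := by exact_mod_cast hC₂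
  rcases le_total n C₂ with h | h
  · rw [min_eq_left h, max_eq_left ((div_le_one hC).2 (by exact_mod_cast h)), mul_one]
  · rw [min_eq_right h, max_eq_right ((one_le_div hC).2 (by exact_mod_cast h))]
    field_simp

theorem value_zero_eq (hv : IsValue C₁ C₂ μ₁ μ₂ h₀ h₁ h₂ v) (hμ₁ : 0 < μ₁) (hμ₂ : 0 < μ₂)
    (hC₂ : 1 ≤ C₂) (k ℓ : ℕ) (hkℓ : k + ℓ ≤ C₁) :
    v 0 k ℓ = k * (h₁ / μ₁) + typeTwoCost C₂ μ₂ h₂ ℓ := by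
  obtain ⟨n, h⟩ : ∃ n, k + ℓ = n := ⟨_, rfl⟩
  induction n generalizing k ℓ with
  | zero =>
    obtain ⟨rfl, rfl⟩ : k = 0 ∧ ℓ = 0 := by omega
    simp [hv.1, typeTwoCost]
  | succ n ih =>
    set T := (k : ℝ) * (h₁ / μ₁) + typeTwoCost C₂ μ₂ h₂ ℓ
    have hd := dRate_pos hμ₁ hμ₂ hC₂ (k := k) (ℓ := ℓ) (by omega)
    have hμ₁' : μ₁ * (h₁ / μ₁) = h₁ := mul_div_cancel₀ _ hμ₁.ne'
    have hμ₂' : μ₂ * (h₂ / μ₂) = h₂ := mul_div_cancel₀ _ hμ₂.ne'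
    have htype₁ : k * μ₁ * v 0 (k - 1) ℓ = k * μ₁ * T - k * h₁ := by
      rcases k with _ | k
      · simp
      · rw [Nat.add_sub_cancel, ih k ℓ (by omega) (by omega)]
        simp only [T]
        push_cast
        linear_combination (-(k : ℝ) - 1) * hμ₁'
    have htype₂ : (min ℓ C₂ : ℕ) * μ₂ * v 0 k (ℓ - 1) = (min ℓ C₂ : ℕ) * μ₂ * T - ℓ * h₂ := by
      rcases ℓ with _ | ℓ
      · simp
      · rw [Nat.add_sub_cancel, ih k ℓ (by omega) (by omega)]
        simp only [T, typeTwoCost]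
        linear_combination (-((min (ℓ + 1) C₂ : ℕ) : ℝ) * max 1 (((ℓ + 1 : ℕ) : ℝ) / C₂)) * hμ₂'
          - h₂ * min_mul_max_one_div hC₂ (ℓ + 1)
    rw [hv.2.1 k ℓ (by omega) (by omega), div_mul_eq_mul_div, div_mul_eq_mul_div, ← add_div,
      ← add_div, div_eq_iff hd.ne', htype₁, htype₂, dRate]
    ring

def fullValue (v : ℕ → ℕ → ℕ → ℝ) (C₁ i j : ℕ) : ℝ := v i j (C₁ - j)

/-- The value just after a departure leaves `m - 1` type-1 and `C₁ - m` type-2 jobs in service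
with `i` jobs waiting: if `i ≠ 0`, one of them is routed to the cheaper type. -/
def postDeparture (v : ℕ → ℕ → ℕ → ℝ) (C₁ : ℕ) : ℕ → ℕ → ℝ
  | 0, m => v 0 (m - 1) (C₁ - m)
  | i + 1, m => min (fullValue v C₁ i m) (fullValue v C₁ i (m - 1))

theorem fullValue_succ (hv : IsValue C₁ C₂ μ₁ μ₂ h₀ h₁ h₂ v) {j : ℕ} (hj : j ≤ C₁) (i : ℕ) :
    fullValue v C₁ (i + 1) j =
      ((i + 1) * h₀ + j * h₁ + (C₁ - j : ℕ) * h₂) / dRate C₂ μ₁ μ₂ j (C₁ - j)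
      + j * μ₁ / dRate C₂ μ₁ μ₂ j (C₁ - j) * postDeparture v C₁ (i + 1) j
      + (min (C₁ - j) C₂ : ℕ) * μ₂ / dRate C₂ μ₁ μ₂ j (C₁ - j)
        * postDeparture v C₁ (i + 1) (j + 1) := by
  have htype₁ : j * μ₁ / dRate C₂ μ₁ μ₂ j (C₁ - j) * min (v i j (C₁ - j)) (v i (j - 1) (C₁ - j + 1))
      = j * μ₁ / dRate C₂ μ₁ μ₂ j (C₁ - j) * postDeparture v C₁ (i + 1) j := by
    rcases Nat.eq_zero_or_pos j with rfl | hj₀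
    · simp
    · rw [postDeparture, fullValue, fullValue, show C₁ - (j - 1) = C₁ - j + 1 by omega]
  have htype₂ : min (v i (j + 1) (C₁ - j - 1)) (v i j (C₁ - j))
      = postDeparture v C₁ (i + 1) (j + 1) := by
    simp only [postDeparture, fullValue, Nat.add_sub_cancel, Nat.sub_sub]
  rw [fullValue, hv.2.2 i j (C₁ - j) (by omega), htype₁, htype₂]

theorem fullValue_eq_of_saturated (hv : IsValue C₁ C₂ μ₁ μ₂ h₀ h₁ h₂ v) (hC₂ : 1 ≤ C₂) {m : ℕ}
    (hm : m + C₂ ≤ C₁) (i : ℕ) :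
    fullValue v C₁ i m = (i * h₀ + m * h₁ + (C₁ - m : ℕ) * h₂ + m * μ₁ * postDeparture v C₁ i m
      + C₂ * μ₂ * postDeparture v C₁ i (m + 1)) / (m * μ₁ + C₂ * μ₂) := by
  have hmin : min (C₁ - m) C₂ = C₂ := by omega
  have hd : dRate C₂ μ₁ μ₂ m (C₁ - m) = m * μ₁ + C₂ * μ₂ := by rw [dRate, hmin]
  cases i with
  | zero =>
    rw [fullValue, hv.2.1 m (C₁ - m) (by omega) (by omega), hd, hmin]
    simp only [postDeparture, Nat.add_sub_cancel, Nat.sub_sub]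
    push_cast
    ring
  | succ i =>
    rw [fullValue_succ hv (by omega), hd, hmin]
    push_cast
    ring

theorem fullValue_succ_sub (hv : IsValue C₁ C₂ μ₁ μ₂ h₀ h₁ h₂ v) (hC₂ : 1 ≤ C₂) {m : ℕ}
    (hm : m + C₂ ≤ C₁) (i : ℕ) :
    fullValue v C₁ (i + 1) m - fullValue v C₁ i m =
      (h₀ + m * μ₁ * (postDeparture v C₁ (i + 1) m - postDeparture v C₁ i m)
        + C₂ * μ₂ * (postDeparture v C₁ (i + 1) (m + 1) - postDeparture v C₁ i (m + 1)))
      / (m * μ₁ + C₂ * μ₂) := by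
  rw [fullValue_eq_of_saturated hv hC₂ hm, fullValue_eq_of_saturated hv hC₂ hm]
  push_cast
  ring

theorem fullValue_succ_le (hv : IsValue C₁ C₂ μ₁ μ₂ h₀ h₁ h₂ v) (hμ₁ : 0 < μ₁) (hμ₂ : 0 < μ₂)
    (hC₂ : 1 ≤ C₂) {j : ℕ} (hj : j < C₁) (i : ℕ) :
    fullValue v C₁ (i + 1) j ≤
      ((i + 1) * h₀ + j * h₁ + (C₁ - j : ℕ) * h₂) / dRate C₂ μ₁ μ₂ j (C₁ - j)
        + fullValue v C₁ i j := by
  rw [fullValue_succ hv hj.le, add_assoc]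
  gcongr
  exact weighted_le (by positivity) (by positivity) (dRate_pos hμ₁ hμ₂ hC₂ (by omega)) rfl
    (min_le_left _ _) (min_le_right _ _)

theorem fullValue_le_succ_of_unsaturated (hv : IsValue C₁ C₂ μ₁ μ₂ h₀ h₁ h₂ v) (hμ₁ : 0 < μ₁)
    (hh₀ : 0 ≤ h₀) (hμ : μ₁ ≤ μ₂) (hcost : h₂ / μ₂ ≤ h₁ / μ₁) (i : ℕ) {j : ℕ}
    (hjC : C₁ ≤ j + C₂) (hj : j < C₁) : fullValue v C₁ i j ≤ fullValue v C₁ i (j + 1) := by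
  have hμ₂ : 0 < μ₂ := hμ₁.trans_le hμ
  induction i generalizing j with
  | zero =>
    have hC₂ : 1 ≤ C₂ := by omega
    obtain ⟨n, hn⟩ : ∃ n, C₁ - j = n + 1 := ⟨C₁ - j - 1, by omega⟩
    have hmax : max 1 (((n + 1 : ℕ) : ℝ) / C₂) = 1 :=
      max_eq_left ((div_le_one (by positivity)).2 (by exact_mod_cast (by omega : n + 1 ≤ C₂)))
    rw [fullValue, fullValue, value_zero_eq hv hμ₁ hμ₂ hC₂ j (C₁ - j) (by omega),
      value_zero_eq hv hμ₁ hμ₂ hC₂ (j + 1) (C₁ - (j + 1)) (by omega), hn,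
      show C₁ - (j + 1) = n by omega, typeTwoCost, hmax]
    push_cast
    linarith
  | succ i ih =>
    have hC₂ : 1 ≤ C₂ := by omega
    have hd : ∀ j', C₁ ≤ j' + C₂ → dRate C₂ μ₁ μ₂ j' (C₁ - j') = j' * μ₁ + (C₁ - j' : ℕ) * μ₂ :=
      fun j' h => by rw [dRate, min_eq_left (by omega)]
    have hlow : ((i + 1) * h₀ + (j + 1 : ℕ) * h₁ + (C₁ - (j + 1) : ℕ) * h₂)
          / dRate C₂ μ₁ μ₂ (j + 1) (C₁ - (j + 1)) + fullValue v C₁ i j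
        ≤ fullValue v C₁ (i + 1) (j + 1) := by
      rw [fullValue_succ hv hj, add_assoc (_ / _)]
      gcongr
      have hpost : postDeparture v C₁ (i + 1) (j + 1) = fullValue v C₁ i j := by
        rw [postDeparture, Nat.add_sub_cancel]
        exact min_eq_right (ih hjC hj)
      refine le_weighted (by positivity) (by positivity)
        (dRate_pos hμ₁ hμ₂ hC₂ (by omega)) rfl hpost.ge fun hq => ?_
      have hj₂ : j + 1 < C₁ := by
        by_contra hcon
        rw [show min (C₁ - (j + 1)) C₂ = 0 by omega] at hq
        simp at hq
      rw [postDeparture, Nat.add_sub_cancel]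
      exact le_min ((ih hjC hj).trans (ih (by omega) hj₂)) (ih hjC hj)
    have hratio : ((i + 1) * h₀ + j * h₁ + (C₁ - j : ℕ) * h₂) / dRate C₂ μ₁ μ₂ j (C₁ - j)
        ≤ ((i + 1) * h₀ + (j + 1 : ℕ) * h₁ + (C₁ - (j + 1) : ℕ) * h₂)
          / dRate C₂ μ₁ μ₂ (j + 1) (C₁ - (j + 1)) := by
      rw [hd j hjC, hd (j + 1) (by omega), show C₁ - j = C₁ - (j + 1) + 1 by omega]
      push_cast
      exact cost_div_rate_le_of_swap (by positivity) (by positivity) (by positivity) hμ₁ hμ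
        (by rwa [div_le_div_iff₀ hμ₂ hμ₁] at hcost)
    linarith [fullValue_succ_le hv hμ₁ hμ₂ hC₂ hj i]

theorem postDeparture_one_sub_zero (hv : IsValue C₁ C₂ μ₁ μ₂ h₀ h₁ h₂ v) (hμ₁ : 0 < μ₁)
    (hμ₂ : 0 < μ₂) (hC₂ : 1 ≤ C₂) {m : ℕ} (hm₀ : 1 ≤ m) (hm : m ≤ C₁) :
    postDeparture v C₁ 1 m - postDeparture v C₁ 0 m
      = min (h₁ / μ₁) (max 1 (((C₁ - m + 1 : ℕ) : ℝ) / C₂) * (h₂ / μ₂)) := by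
  simp only [postDeparture, fullValue]
  rw [value_zero_eq hv hμ₁ hμ₂ hC₂ m (C₁ - m) (by omega),
    value_zero_eq hv hμ₁ hμ₂ hC₂ (m - 1) (C₁ - (m - 1)) (by omega),
    value_zero_eq hv hμ₁ hμ₂ hC₂ (m - 1) (C₁ - m) (by omega),
    show C₁ - (m - 1) = C₁ - m + 1 by omega, typeTwoCost, ← min_sub_sub_right, Nat.cast_sub hm₀]
  congr 1 <;> ring

theorem fullValue_gain_sub_ge (hv : IsValue C₁ C₂ μ₁ μ₂ h₀ h₁ h₂ v) (hμ₁ : 0 < μ₁)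
    (hμ₂ : 0 < μ₂) (hC₂ : 1 ≤ C₂) {i : ℕ}
    (hP : ∀ m, 1 ≤ m → m + C₂ ≤ C₁ →
      postDeparture v C₁ (i + 1) (m + 1) - postDeparture v C₁ i (m + 1)
        ≤ postDeparture v C₁ (i + 1) m - postDeparture v C₁ i m)
    {j : ℕ} (hj : j + 1 + C₂ ≤ C₁) :
    h₀ * μ₁ / ((j * μ₁ + C₂ * μ₂) * ((j + 1) * μ₁ + C₂ * μ₂))
      ≤ (fullValue v C₁ (i + 1) j - fullValue v C₁ i j)
        - (fullValue v C₁ (i + 1) (j + 1) - fullValue v C₁ i (j + 1)) :=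
  average_sub_succ_ge (P := fun m => postDeparture v C₁ (i + 1) m - postDeparture v C₁ i m)
    (W := fun m => fullValue v C₁ (i + 1) m - fullValue v C₁ i m) hμ₁ (by positivity)
    (fun _ hm => fullValue_succ_sub hv hC₂ (by omega) i) (fun hj₀ => hP j hj₀ (by omega))
    (hP (j + 1) (by omega) hj)

theorem postDeparture_gain_antitone (hv : IsValue C₁ C₂ μ₁ μ₂ h₀ h₁ h₂ v) (hμ₁ : 0 < μ₁)
    (hC₂ : 1 ≤ C₂) (hh₀ : 0 ≤ h₀) (hh₂ : 0 ≤ h₂) (hμ : μ₁ ≤ μ₂) (hcost : h₂ / μ₂ ≤ h₁ / μ₁)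
    (i : ℕ) : ∀ m, 1 ≤ m → m + C₂ ≤ C₁ →
      postDeparture v C₁ (i + 1) (m + 1) - postDeparture v C₁ i (m + 1)
        ≤ postDeparture v C₁ (i + 1) m - postDeparture v C₁ i m := by
  have hμ₂ : 0 < μ₂ := hμ₁.trans_le hμ
  induction i with
  | zero =>
    intro m hm₀ hm
    rw [postDeparture_one_sub_zero hv hμ₁ hμ₂ hC₂ hm₀ (by omega),
      postDeparture_one_sub_zero hv hμ₁ hμ₂ hC₂ (by omega) (by omega)]
    gcongr
    omega
  | succ i ih =>
    intro m hm₀ hm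
    set W := fun j => fullValue v C₁ (i + 1) j - fullValue v C₁ i j
    have hW_anti : ∀ j, j + 1 + C₂ ≤ C₁ → W (j + 1) ≤ W j := fun j hj => by
      have hgain := fullValue_gain_sub_ge hv hμ₁ hμ₂ hC₂ (h₀ := h₀) ih hj
      have hε : 0 ≤ h₀ * μ₁ / ((j * μ₁ + C₂ * μ₂) * ((j + 1) * μ₁ + C₂ * μ₂)) := by positivity
      simp only [W]
      linarith
    have hlow : W m ≤ postDeparture v C₁ (i + 1 + 1) m - postDeparture v C₁ (i + 1) m := by
      have hWm : W m ≤ W (m - 1) := by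
        simpa only [Nat.sub_add_cancel hm₀] using hW_anti (m - 1) (by omega)
      calc W m = min (W m) (W (m - 1)) := (min_eq_left hWm).symm
        _ ≤ _ := min_sub_le_min_sub_min _ _ _ _
    have hup : postDeparture v C₁ (i + 1 + 1) (m + 1) - postDeparture v C₁ (i + 1) (m + 1)
        ≤ W m := by
      simp only [postDeparture, Nat.add_sub_cancel]
      rcases (show m + 1 + C₂ ≤ C₁ ∨ m + C₂ = C₁ by omega) with hm' | hm'
      · calc _ ≤ max (W (m + 1)) (W m) := min_sub_min_le_max_sub _ _ _ _
          _ = W m := max_eq_right (hW_anti m hm')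
      · have hmono := fullValue_le_succ_of_unsaturated hv hμ₁ hh₀ hμ hcost (j := m)
        rw [min_eq_right (hmono (i + 1) (by omega) (by omega)),
          min_eq_right (hmono i (by omega) (by omega))]
    linarith

theorem Dv_eq_fullValue_sub {i j ℓ : ℕ} (h : j + 1 + ℓ = C₁) :
    Dv v i (j + 1) ℓ = fullValue v C₁ i (j + 1) - fullValue v C₁ i j := by
  rw [Dv, fullValue, fullValue, Nat.add_sub_cancel, show C₁ - (j + 1) = ℓ by omega,
    show C₁ - j = ℓ + 1 by omega]

end ClearingSystem

theorem stmt3_general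
    (C₁ C₂ : ℕ) (hC₂pos : 1 ≤ C₂)
    (μ₁ μ₂ h₀ h₁ h₂ : ℝ)
    (hμ₁ : 0 < μ₁) (hμ₂ : 0 < μ₂)
    (hh₀ : 0 < h₀) (hh₂ : 0 < h₂)
    (v : ℕ → ℕ → ℕ → ℝ) (hv : IsValue C₁ C₂ μ₁ μ₂ h₀ h₁ h₂ v)
    (hμ : μ₁ ≤ μ₂) (hcost : h₂ / μ₂ ≤ h₁ / μ₁)
    (k ℓ : ℕ) (hkl : k + ℓ = C₁) (hk : 1 ≤ k) (hℓ : C₂ ≤ ℓ) :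
    (∀ i : ℕ, 0 ≤ Dv v i k ℓ - Dv v (i + 1) k ℓ) ∧
    ∃ N : ℕ, (∀ i : ℕ, Dv v i k ℓ ≤ 0 ↔ N ≤ i) ∧
      ∃ I : ℕ, ∀ i : ℕ, I ≤ i → Dv v i k ℓ < 0 := by
  obtain ⟨j, rfl⟩ : ∃ j, k = j + 1 := ⟨k - 1, by omega⟩
  have hε : 0 < h₀ * μ₁ / ((j * μ₁ + C₂ * μ₂) * ((j + 1) * μ₁ + C₂ * μ₂)) := by positivity
  have hstep : ∀ i, Dv v (i + 1) (j + 1) ℓ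
      ≤ Dv v i (j + 1) ℓ - h₀ * μ₁ / ((j * μ₁ + C₂ * μ₂) * ((j + 1) * μ₁ + C₂ * μ₂)) := by
    intro i
    have hgain := fullValue_gain_sub_ge hv hμ₁ hμ₂ hC₂pos
      (postDeparture_gain_antitone hv hμ₁ hC₂pos hh₀.le hh₂.le hμ hcost i) (j := j) (by omega)
    rw [Dv_eq_fullValue_sub hkl, Dv_eq_fullValue_sub hkl]
    linarith
  exact ⟨fun i => by linarith [hstep i], exists_nonpos_iff_and_eventually_neg hε hstep⟩

theorem stmt3
    (C₁ C₂ : ℕ) (hC₂pos : 1 ≤ C₂) (hC : C₂ < C₁)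
    (μ₁ μ₂ h₀ h₁ h₂ : ℝ)
    (hμ₁ : 0 < μ₁) (hμ₂ : 0 < μ₂)
    (hh₀ : 0 < h₀) (hh₁ : 0 < h₁) (hh₂ : 0 < h₂)
    (v : ℕ → ℕ → ℕ → ℝ) (hv : IsValue C₁ C₂ μ₁ μ₂ h₀ h₁ h₂ v)
    (hμ : μ₁ ≤ μ₂) (hcost : h₂ / μ₂ ≤ h₁ / μ₁)
    (k ℓ : ℕ) (hkl : k + ℓ = C₁) (hk : 1 ≤ k) (hℓ : C₂ ≤ ℓ) :
    (∀ i : ℕ, 0 ≤ Dv v i k ℓ - Dv v (i + 1) k ℓ) ∧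
    ∃ N : ℕ, (∀ i : ℕ, Dv v i k ℓ ≤ 0 ↔ N ≤ i) ∧
      ∃ I : ℕ, ∀ i : ℕ, I ≤ i → Dv v i k ℓ < 0 :=
  stmt3_general C₁ C₂ hC₂pos μ₁ μ₂ h₀ h₁ h₂ hμ₁ hμ₂ hh₀ hh₂ v hv hμ hcost k ℓ hkl hk hℓ
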